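/- Let E be an edge constraint and Γ a set of configurations such that every singleton configuration satisfying the universal quantifier w.r.t. E is dominated by some member of Γ. Then for every configuration C, all of whose sets are nonempty, that satisfies the universal quantifier w.r.t. E, the combination-closure of Γ contains a configuration dominating C. (Combination is complete.) -/

import Mathlib

/-!
Induction on the total size `∑ i, #(C i)`. A singleton configuration is dominated by a member
of `Γ` by hypothesis. Otherwise some `C u` has two elements; for `x ∈ C u`, replacing `C u` by
`{x}`, resp. by `C u \ {x}`, gives two strictly smaller configurations, both dominated by `C`
(so they inherit the universal quantifier), whose combination with `φ = 1` and union at `u`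
is `C` itself. Since combination is monotone under domination, combining the members of the
closure that dominate the two parts yields one that dominates `C`.
-/
namespace RoundElim

/-- The configuration (multiset of cardinality `δ`) associated to a function `Fin δ → α`. -/
def ofFn {α : Type*} {δ : ℕ} (f : Fin δ → α) : Multiset α :=
  (List.ofFn f : List α)

variable {σ : Type*} [DecidableEq σ]

/-- `DominatedBy A B` means: configuration `B` dominates configuration `A`. -/
def DominatedBy (A B : Multiset (Finset σ)) : Prop :=
  Multiset.Rel (· ⊆ ·) A B

/-- `StrictlyDominatedBy A B` means: configuration `B` strictly dominates configuration `A`. -/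
def StrictlyDominatedBy (A B : Multiset (Finset σ)) : Prop :=
  DominatedBy A B ∧ ¬ DominatedBy B A

/-- The combination of the representatives `a`, `b` with respect to the permutation `φ`
and the index `u`: union at position `u`, intersection everywhere else. -/
def combineFn {δ : ℕ} (a b : Fin δ → Finset σ) (φ : Equiv.Perm (Fin δ)) (u : Fin δ) :
    Fin δ → Finset σ :=
  fun i => if i = u then a i ∪ b (φ i) else a i ∩ b (φ i)

/-- `C` is a combination of the configurations `A` and `B`. -/
def IsCombination (δ : ℕ) (C A B : Multiset (Finset σ)) : Prop :=
  ∃ (a b : Fin δ → Finset σ) (φ : Equiv.Perm (Fin δ)) (u : Fin δ),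
    ofFn a = A ∧ ofFn b = B ∧ ofFn (combineFn a b φ u) = C

/-- `C` satisfies the universal quantifier w.r.t. the edge constraint `E`. -/
def SatUQ (E : Set (Multiset σ)) (C : Multiset (Finset σ)) : Prop :=
  ∀ M : Multiset σ, Multiset.Rel (· ∈ ·) M C → M ∈ E

/-- A singleton configuration: all its sets have exactly one element. -/
def IsSingletonConfig (C : Multiset (Finset σ)) : Prop :=
  ∀ s ∈ C, s.card = 1

/-- The combination-closure of a set `Γ` of configurations: the smallest set containing `Γ`
and containing every combination of two of its members. -/
inductive CombClosure (δ : ℕ) (Γ : Set (Multiset (Finset σ))) :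
    Multiset (Finset σ) → Prop
  | base {C : Multiset (Finset σ)} : C ∈ Γ → CombClosure δ Γ C
  | comb {A B C : Multiset (Finset σ)} : CombClosure δ Γ A → CombClosure δ Γ B →
      IsCombination δ C A B → CombClosure δ Γ C

theorem _root_.Multiset.Rel.comp {α β γ : Type*} {r : α → β → Prop} {p : β → γ → Prop}
    {s : Multiset α} {t : Multiset β} {u : Multiset γ} (hst : s.Rel r t) (htu : t.Rel p u) :
    s.Rel (Relation.Comp r p) u := by
  induction hst generalizing u with
  | zero => rw [Multiset.rel_zero_left.mp htu]; exact .zero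
  | cons hab _ ih =>
    obtain ⟨c, cs, hbc, hcs, rfl⟩ := Multiset.rel_cons_left.mp htu
    exact (ih hcs).cons ⟨_, hab, hbc⟩

section

variable {α β : Type*} {δ : ℕ}

theorem ofFn_succ (f : Fin (δ + 1) → α) : ofFn f = f 0 ::ₘ ofFn (fun i => f i.succ) := by
  simp [ofFn, List.ofFn_succ]

theorem mem_ofFn {f : Fin δ → α} {s : α} : s ∈ ofFn f ↔ ∃ i, f i = s := by
  simp [ofFn, List.mem_ofFn']

theorem card_ofFn (f : Fin δ → α) : Multiset.card (ofFn f) = δ := by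
  simp [ofFn]

theorem exists_ofFn_eq {M : Multiset α} (h : Multiset.card M = δ) :
    ∃ f : Fin δ → α, ofFn f = M := by
  subst h
  have hl : M.toList.length = Multiset.card M := Multiset.length_toList M
  refine ⟨fun i => M.toList.get (Fin.cast hl.symm i), ?_⟩
  rw [ofFn, ← List.ofFn_congr hl, List.ofFn_get, Multiset.coe_toList]

theorem rel_ofFn_ofFn {r : α → β → Prop} {f : Fin δ → α} {g : Fin δ → β}
    (h : ∀ i, r (f i) (g i)) : Multiset.Rel r (ofFn f) (ofFn g) := by
  induction δ with
  | zero => simp [ofFn]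
  | succ δ ih =>
    rw [ofFn_succ f, ofFn_succ g]
    exact (ih fun i => h i.succ).cons (h 0)

theorem exists_ofFn_of_rel_ofFn_left {r : α → β → Prop} {f : Fin δ → α} {M : Multiset β}
    (h : Multiset.Rel r (ofFn f) M) : ∃ g : Fin δ → β, ofFn g = M ∧ ∀ i, r (f i) (g i) := by
  induction δ generalizing M with
  | zero => exact ⟨Fin.elim0, by simpa [ofFn, eq_comm] using h, fun i => i.elim0⟩
  | succ δ ih =>
    rw [ofFn_succ, Multiset.rel_cons_left] at h
    obtain ⟨b, N, hb, hN, rfl⟩ := h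
    obtain ⟨g, rfl, hg⟩ := ih hN
    exact ⟨Fin.cons b g, by simp [ofFn_succ], Fin.cases hb hg⟩

theorem sum_card_update_lt {c : Fin δ → Finset α} {u : Fin δ} {s : Finset α}
    (hs : s.card < (c u).card) :
    ∑ i, (Function.update c u s i).card < ∑ i, (c i).card := by
  refine Finset.sum_lt_sum (fun i _ => ?_) ⟨u, Finset.mem_univ u, by simpa using hs⟩
  rcases eq_or_ne i u with rfl | hi
  · simpa using hs.le
  · simp [hi]

theorem isSingletonConfig_ofFn {c : Fin δ → Finset α} :
    IsSingletonConfig (ofFn c) ↔ ∀ i, (c i).card = 1 := by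
  simp [IsSingletonConfig, mem_ofFn]

theorem SatUQ.of_dominatedBy {E : Set (Multiset α)} {A B : Multiset (Finset α)}
    (hB : SatUQ E B) (hAB : DominatedBy A B) : SatUQ E A := fun M hM =>
  hB M <| (hM.comp hAB).mono fun _ _ _ _ ⟨_, hx, hs⟩ => hs hx

end

section Combination

variable {δ : ℕ}

theorem combineFn_mono {a a' b b' : Fin δ → Finset σ} (ha : ∀ i, a i ⊆ a' i)
    (hb : ∀ i, b i ⊆ b' i) (φ : Equiv.Perm (Fin δ)) (u i : Fin δ) :
    combineFn a b φ u i ⊆ combineFn a' b' φ u i := by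
  unfold combineFn
  split_ifs
  · exact Finset.union_subset_union (ha i) (hb (φ i))
  · exact Finset.inter_subset_inter (ha i) (hb (φ i))

theorem IsCombination.exists_dominatedBy {A B A' B' C : Multiset (Finset σ)}
    (hC : IsCombination δ C A B) (hA : DominatedBy A A') (hB : DominatedBy B B') :
    ∃ C', IsCombination δ C' A' B' ∧ DominatedBy C C' := by
  obtain ⟨a, b, φ, u, rfl, rfl, rfl⟩ := hC
  obtain ⟨a', rfl, ha⟩ := exists_ofFn_of_rel_ofFn_left hA
  obtain ⟨b', rfl, hb⟩ := exists_ofFn_of_rel_ofFn_left hB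
  exact ⟨_, ⟨a', b', φ, u, rfl, rfl, rfl⟩, rel_ofFn_ofFn (combineFn_mono ha hb φ u)⟩

theorem isCombination_update_singleton_update_erase {c : Fin δ → Finset σ} {u : Fin δ}
    {x : σ} (hx : x ∈ c u) :
    IsCombination δ (ofFn c) (ofFn (Function.update c u {x}))
      (ofFn (Function.update c u ((c u).erase x))) := by
  refine ⟨_, _, 1, u, rfl, rfl, congrArg ofFn (funext fun i => ?_)⟩
  rcases eq_or_ne i u with rfl | hi
  · simp [combineFn, Finset.insert_erase hx]
  · simp [combineFn, hi]

end Combination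

theorem exists_combClosure_dominatedBy_ofFn {δ : ℕ} {E : Set (Multiset σ)}
    {Γ : Set (Multiset (Finset σ))}
    (hΓ : ∀ M : Multiset (Finset σ), Multiset.card M = δ → IsSingletonConfig M →
      SatUQ E M → ∃ A ∈ Γ, DominatedBy M A)
    (c : Fin δ → Finset σ) (hne : ∀ i, (c i).Nonempty) (huq : SatUQ E (ofFn c)) :
    ∃ C', CombClosure δ Γ C' ∧ DominatedBy (ofFn c) C' := by
  by_cases hsing : ∀ i, (c i).card = 1
  · obtain ⟨A, hA, hdom⟩ := hΓ _ (card_ofFn c) (isSingletonConfig_ofFn.mpr hsing) huq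
    exact ⟨A, .base hA, hdom⟩
  obtain ⟨u, hu⟩ := not_forall.mp hsing
  have hnt : (c u).Nontrivial :=
    ((hne u).exists_eq_singleton_or_nontrivial.resolve_left
      fun ⟨_, h⟩ => hu (by rw [h, Finset.card_singleton]))
  obtain ⟨x, hx⟩ := hne u
  have hsub : ∀ s ⊆ c u, ∀ i, Function.update c u s i ⊆ c i := fun s hs =>
    (Function.forall_update_iff _ (p := fun i (t : Finset σ) => t ⊆ c i)).mpr
      ⟨hs, fun _ _ => subset_rfl⟩
  have hne' : ∀ s : Finset σ, s.Nonempty → ∀ i, (Function.update c u s i).Nonempty :=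
    fun s hs => (Function.forall_update_iff _ (p := fun _ (t : Finset σ) => t.Nonempty)).mpr
      ⟨hs, fun i _ => hne i⟩
  have hlt₁ : ({x} : Finset σ).card < (c u).card := by
    rw [Finset.card_singleton]; exact Finset.one_lt_card_iff_nontrivial.mpr hnt
  have hlt₂ : ((c u).erase x).card < (c u).card := Finset.card_erase_lt_of_mem hx
  obtain ⟨A, hA, hdomA⟩ := exists_combClosure_dominatedBy_ofFn hΓ _
    (hne' _ (Finset.singleton_nonempty x))
    (huq.of_dominatedBy (rel_ofFn_ofFn (hsub _ (Finset.singleton_subset_iff.mpr hx))))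
  obtain ⟨B, hB, hdomB⟩ := exists_combClosure_dominatedBy_ofFn hΓ _
    (hne' _ hnt.erase_nonempty)
    (huq.of_dominatedBy (rel_ofFn_ofFn (hsub _ (Finset.erase_subset x _))))
  obtain ⟨C', hC', hdomC⟩ :=
    (isCombination_update_singleton_update_erase hx).exists_dominatedBy hdomA hdomB
  exact ⟨C', .comb hA hB hC', hdomC⟩
termination_by ∑ i, (c i).card
decreasing_by
  · exact sum_card_update_lt hlt₁
  · exact sum_card_update_lt hlt₂

theorem combination_complete_general {σ : Type*} [DecidableEq σ] (δ : ℕ)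
    (E : Set (Multiset σ)) (Γ : Set (Multiset (Finset σ)))
    (hΓsing : ∀ M : Multiset (Finset σ), Multiset.card M = δ → IsSingletonConfig M →
      SatUQ E M → ∃ A ∈ Γ, DominatedBy M A)
    (C : Multiset (Finset σ)) (hCcard : Multiset.card C = δ)
    (hCne : ∀ s ∈ C, s.Nonempty) (hCuq : SatUQ E C) :
    ∃ C' : Multiset (Finset σ), CombClosure δ Γ C' ∧ DominatedBy C C' := by
  obtain ⟨c, rfl⟩ := exists_ofFn_eq hCcard
  exact exists_combClosure_dominatedBy_ofFn hΓsing c (fun i => hCne _ (mem_ofFn.mpr ⟨i, rfl⟩))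
    hCuq

/-- Combination is complete: if every singleton configuration satisfying the universal
quantifier w.r.t. `E` is dominated by some member of `Γ`, then for every configuration `C`
with nonempty sets satisfying the universal quantifier w.r.t. `E`, the combination-closure
of `Γ` contains a configuration dominating `C`. -/
theorem combination_complete {σ : Type*} [Fintype σ] [DecidableEq σ] (δ : ℕ) (hδ : 0 < δ)
    (E : Set (Multiset σ)) (Γ : Set (Multiset (Finset σ)))
    (hΓsing : ∀ M : Multiset (Finset σ), Multiset.card M = δ → IsSingletonConfig M →
      SatUQ E M → ∃ A ∈ Γ, DominatedBy M A)
    (C : Multiset (Finset σ)) (hCcard : Multiset.card C = δ)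
    (hCne : ∀ s ∈ C, s.Nonempty) (hCuq : SatUQ E C) :
    ∃ C' : Multiset (Finset σ), CombClosure δ Γ C' ∧ DominatedBy C C' :=
  combination_complete_general δ E Γ hΓsing C hCcard hCne hCuq

end RoundElim
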